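/- Let A : Fin m → Fin n → ℝ and B : Fin m → Fin k → ℝ (m, n, k ≥ 1). If x : Fin n → ℝ is a fixed point of one alternating-method iteration, ψ(x) = x, then the pair (x, g(x)) solves the separated system: (A⊗x) i = (B⊗g(x)) i for all i ∈ Fin m. -/

import Mathlib

open Finset

/-- Max-plus product of a real matrix with a real vector:
`(M ⊗ x) i = max_l (M i l + x l)`. -/
noncomputable def mpR {p q : ℕ} [NeZero p] [NeZero q]
    (M : Fin p → Fin q → ℝ) (x : Fin q → ℝ) : Fin p → ℝ :=
  fun i => univ.sup' univ_nonempty fun l => M i l + x l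

/-- First half-step of the alternating method for the separated system
`A ⊗ x = B ⊗ y`: `g(x) l = min_i ( -B i l + (A ⊗ x) i )`. -/
noncomputable def gR {m n k : ℕ} [NeZero m] [NeZero n] [NeZero k]
    (A : Fin m → Fin n → ℝ) (B : Fin m → Fin k → ℝ) (x : Fin n → ℝ) : Fin k → ℝ :=
  fun l => univ.inf' univ_nonempty fun i => -B i l + mpR A x i

/-- One full iteration of the alternating method:
`ψ(x) j = min_i ( -A i j + (B ⊗ g(x)) i )`. -/
noncomputable def psiR {m n k : ℕ} [NeZero m] [NeZero n] [NeZero k]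
    (A : Fin m → Fin n → ℝ) (B : Fin m → Fin k → ℝ) (x : Fin n → ℝ) : Fin n → ℝ :=
  fun j => univ.inf' univ_nonempty fun i => -A i j + mpR B (gR A B x) i

/-!
Both half-steps are max-plus residuals: `b ↦ (l ↦ min_i (-M i l + b i))` is the upper adjoint of
`x ↦ M ⊗ x`, with `g(x)` the residual of `B` at `A ⊗ x` and `ψ(x)` that of `A` at `B ⊗ g(x)`.
So `B ⊗ g(x) ≤ A ⊗ x` holds for every `x`, while `x ≤ ψ(x)` is equivalent to `A ⊗ x ≤ B ⊗ g(x)`.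
-/

noncomputable def mpResR {p q : ℕ} [NeZero p]
    (M : Fin p → Fin q → ℝ) (b : Fin p → ℝ) : Fin q → ℝ :=
  fun l => univ.inf' univ_nonempty fun i => -M i l + b i

theorem gc_mpR_mpResR {p q : ℕ} [NeZero p] [NeZero q] (M : Fin p → Fin q → ℝ) :
    GaloisConnection (mpR M) (mpResR M) := by
  intro x b
  simp only [Pi.le_def, mpR, mpResR, sup'_le_iff, le_inf'_iff, mem_univ, true_implies,
    le_neg_add_iff_add_le]
  exact forall_comm

theorem gR_eq_mpResR {m n k : ℕ} [NeZero m] [NeZero n] [NeZero k]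
    (A : Fin m → Fin n → ℝ) (B : Fin m → Fin k → ℝ) (x : Fin n → ℝ) :
    gR A B x = mpResR B (mpR A x) :=
  rfl

theorem psiR_eq_mpResR {m n k : ℕ} [NeZero m] [NeZero n] [NeZero k]
    (A : Fin m → Fin n → ℝ) (B : Fin m → Fin k → ℝ) (x : Fin n → ℝ) :
    psiR A B x = mpResR A (mpR B (gR A B x)) :=
  rfl

theorem mpR_gR_le {m n k : ℕ} [NeZero m] [NeZero n] [NeZero k]
    (A : Fin m → Fin n → ℝ) (B : Fin m → Fin k → ℝ) (x : Fin n → ℝ) :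
    mpR B (gR A B x) ≤ mpR A x := by
  rw [gR_eq_mpResR]
  exact (gc_mpR_mpResR B).l_u_le (mpR A x)

theorem mpR_le_mpR_gR_of_le_psiR {m n k : ℕ} [NeZero m] [NeZero n] [NeZero k]
    (A : Fin m → Fin n → ℝ) (B : Fin m → Fin k → ℝ) {x : Fin n → ℝ} (hx : x ≤ psiR A B x) :
    mpR A x ≤ mpR B (gR A B x) :=
  (gc_mpR_mpResR A).le_iff_le.mpr (psiR_eq_mpResR A B x ▸ hx)

theorem stmt14 {m n k : ℕ} [NeZero m] [NeZero n] [NeZero k]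
    (A : Fin m → Fin n → ℝ) (B : Fin m → Fin k → ℝ)
    (x : Fin n → ℝ) (hfix : psiR A B x = x) :
    ∀ i : Fin m, mpR A x i = mpR B (gR A B x) i :=
  congrFun <| le_antisymm (mpR_le_mpR_gR_of_le_psiR A B hfix.ge) (mpR_gR_le A B x)
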